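/- Let G be a group acting by ring automorphisms on a (possibly noncommutative) ring R, and let N be a normal subgroup of G of finite index. Let P be a prime two-sided ideal of R and let I be a two-sided ideal of R with I ⊇ P and I:G = P:G. Then I:N = P:N. -/

import Mathlib

section Defs

variable {G R : Type*} [Group G] [Ring R] [MulSemiringAction G R]

/-- The image `g·I` of a two-sided ideal `I` under the ring automorphism `x ↦ g • x`;
as a set it is `{g • x : x ∈ I}`, realised as the preimage under `x ↦ g⁻¹ • x`. -/
def idealSMul (g : G) (I : TwoSidedIdeal R) : TwoSidedIdeal R :=
  TwoSidedIdeal.comap (MulSemiringAction.toRingHom G R g⁻¹) I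

/-- `I : H = ⋂_{h ∈ H} h·I`, the largest `H`-stable two-sided ideal contained in `I`. -/
def idealColon (H : Subgroup G) (I : TwoSidedIdeal R) : TwoSidedIdeal R :=
  ⨅ h : H, idealSMul (h : G) I

/-- A two-sided ideal `P` is prime if `P ≠ R` and `A·B ⊆ P` implies `A ⊆ P` or `B ⊆ P`. -/
def IsPrimeTwoSided (P : TwoSidedIdeal R) : Prop :=
  P ≠ ⊤ ∧ ∀ A B : TwoSidedIdeal R, (∀ a ∈ A, ∀ b ∈ B, a * b ∈ P) → A ≤ P ∨ B ≤ P

end Defs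

section Aux

variable {G R : Type*} [Group G] [Ring R] [MulSemiringAction G R]

lemma mem_idealSMul {g : G} {I : TwoSidedIdeal R} {x : R} :
    x ∈ idealSMul g I ↔ g⁻¹ • x ∈ I := by
  simp [idealSMul, TwoSidedIdeal.mem_comap]

lemma idealSMul_mul (a b : G) (I : TwoSidedIdeal R) :
    idealSMul (a * b) I = idealSMul a (idealSMul b I) := by
  refine SetLike.ext fun x => ?_
  simp [mem_idealSMul, mul_smul]

lemma idealSMul_one (I : TwoSidedIdeal R) : idealSMul (1 : G) I = I := by
  refine SetLike.ext fun x => ?_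
  simp [mem_idealSMul]

lemma idealSMul_mono (g : G) {I J : TwoSidedIdeal R} (h : I ≤ J) :
    idealSMul g I ≤ idealSMul g J := fun x hx =>
  mem_idealSMul.2 (h (mem_idealSMul.1 hx))

lemma mem_idealColon {H : Subgroup G} {I : TwoSidedIdeal R} {x : R} :
    x ∈ idealColon H I ↔ ∀ h ∈ H, x ∈ idealSMul h I := by
  rw [idealColon, TwoSidedIdeal.mem_iInf]
  exact ⟨fun h g hg => h ⟨g, hg⟩, fun h g => h g g.2⟩

lemma idealColon_mono (H : Subgroup G) {I J : TwoSidedIdeal R} (h : I ≤ J) :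
    idealColon H I ≤ idealColon H J := fun x hx =>
  mem_idealColon.2 fun g hg => idealSMul_mono g h (mem_idealColon.1 hx g hg)

/-- `I : N` is stable under the action of `N`. -/
lemma idealSMul_idealColon_self {N : Subgroup G} {n : G} (hn : n ∈ N)
    (I : TwoSidedIdeal R) : idealSMul n (idealColon N I) = idealColon N I := by
  have key : ∀ m : G, m ∈ N → idealSMul m (idealColon N I) ≤ idealColon N I := by
    intro m hm x hx
    rw [mem_idealSMul] at hx
    rw [mem_idealColon] at hx ⊢
    intro h hh
    have h2 := hx (m⁻¹ * h) (N.mul_mem (N.inv_mem hm) hh)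
    rw [mem_idealSMul] at h2 ⊢
    rw [← mul_smul] at h2
    have heq : (m⁻¹ * h)⁻¹ * m⁻¹ = h⁻¹ := by group
    rwa [heq] at h2
  refine le_antisymm (key n hn) fun x hx => ?_
  rw [mem_idealSMul]
  exact key n⁻¹ (N.inv_mem hn) (by rw [mem_idealSMul, inv_inv, ← mul_smul, mul_inv_cancel, one_smul]; exact hx)

lemma list_prod_mem_of_mem {xs : List R} {x : R} (hx : x ∈ xs)
    (T : TwoSidedIdeal R) (hxT : x ∈ T) : xs.prod ∈ T := by
  induction xs with
  | nil => simp at hx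
  | cons a xs ih =>
    rw [List.prod_cons]
    rcases List.mem_cons.1 hx with rfl | hx
    · exact T.mul_mem_right _ _ hxT
    · exact T.mul_mem_left _ _ (ih hx)

lemma forall₂_exists_mem {xs : List R} {L : List (TwoSidedIdeal R)}
    (h : List.Forall₂ (· ∈ ·) xs L) {A : TwoSidedIdeal R} (hA : A ∈ L) :
    ∃ x ∈ xs, x ∈ A := by
  induction h with
  | nil => simp at hA
  | cons hab _ ih =>
    rcases List.mem_cons.1 hA with rfl | hA
    · exact ⟨_, List.mem_cons_self, hab⟩
    · obtain ⟨x, hx, hxA⟩ := ih hA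
      exact ⟨x, List.mem_cons_of_mem _ hx, hxA⟩

/-- A prime two-sided ideal containing all "products" of a list of ideals contains one of them. -/
lemma prime_list {P : TwoSidedIdeal R} (hP : IsPrimeTwoSided P) :
    ∀ L : List (TwoSidedIdeal R),
      (∀ xs : List R, List.Forall₂ (· ∈ ·) xs L → xs.prod ∈ P) → ∃ A ∈ L, A ≤ P := by
  intro L
  induction L with
  | nil =>
    intro h
    exact absurd (P.eq_top (by simpa using h [] List.Forall₂.nil)) hP.1
  | cons A L ih =>
    intro h
    set S : Set R := {b | ∃ xs : List R, List.Forall₂ (· ∈ ·) xs L ∧ xs.prod = b} with hS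
    have hprod : ∀ a ∈ A, ∀ b ∈ TwoSidedIdeal.span S, a * b ∈ P := by
      intro a ha b hb
      set T : TwoSidedIdeal R := TwoSidedIdeal.mk' {b | ∀ a ∈ A, a * b ∈ P}
        (by intro a ha; simp)
        (by intro x y hx hy a ha; rw [mul_add]; exact P.add_mem (hx a ha) (hy a ha))
        (by intro x hx a ha; rw [mul_neg]; exact P.neg_mem (hx a ha))
        (by intro x y hy a ha; rw [← mul_assoc]; exact hy _ (A.mul_mem_right a x ha))
        (by intro x y hx a ha; rw [← mul_assoc]; exact P.mul_mem_right _ _ (hx a ha)) with hT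
      have hST : S ⊆ T := by
        rintro _ ⟨xs, hxs, rfl⟩
        rw [hT, SetLike.mem_coe, TwoSidedIdeal.mem_mk']
        intro a' ha'
        rw [← List.prod_cons]
        exact h _ (List.Forall₂.cons ha' hxs)
      have hbT := TwoSidedIdeal.mem_span_iff.1 hb T hST
      rw [hT, TwoSidedIdeal.mem_mk'] at hbT
      exact hbT a ha
    rcases hP.2 A (TwoSidedIdeal.span S) hprod with hA | hB
    · exact ⟨A, List.mem_cons_self, hA⟩
    · obtain ⟨B, hB1, hB2⟩ := ih fun xs hxs =>
        hB (TwoSidedIdeal.subset_span ⟨xs, hxs, rfl⟩)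
      exact ⟨B, List.mem_cons_of_mem _ hB1, hB2⟩

end Aux

/-- For `N` a normal subgroup of finite index in `G`, a prime two-sided ideal `P` and an
ideal `I ⊇ P` with `I:G = P:G`, one has `I:N = P:N`. -/
theorem stmt10 {G R : Type*} [Group G] [Ring R] [MulSemiringAction G R]
    (N : Subgroup G) [N.Normal] [N.FiniteIndex]
    (P I : TwoSidedIdeal R) (hP : IsPrimeTwoSided P) (hPI : P ≤ I)
    (hcolon : idealColon (⊤ : Subgroup G) I = idealColon (⊤ : Subgroup G) P) :
    idealColon N I = idealColon N P := by
  classical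
  set J := idealColon N I with hJ
  set Q := idealColon N P with hQ
  have hQJ : Q ≤ J := idealColon_mono N hPI
  refine le_antisymm ?_ hQJ
  letI : Fintype (G ⧸ N) := N.fintypeQuotientOfFiniteIndex
  set L : List (TwoSidedIdeal R) :=
    (Finset.univ : Finset (G ⧸ N)).toList.map (fun q => idealSMul (Quotient.out q) J) with hL
  have hprods : ∀ xs : List R, List.Forall₂ (· ∈ ·) xs L → xs.prod ∈ P := by
    intro xs hxs
    have hxP : xs.prod ∈ idealColon (⊤ : Subgroup G) I := by
      rw [mem_idealColon]
      intro g _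
      have hmem : idealSMul (Quotient.out (QuotientGroup.mk g : G ⧸ N)) J ∈ L := by
        rw [hL]
        exact List.mem_map_of_mem (Finset.mem_toList.2 (Finset.mem_univ _))
      obtain ⟨x, hx, hxA⟩ := forall₂_exists_mem hxs hmem
      have hp := list_prod_mem_of_mem hx _ hxA
      rw [mem_idealSMul] at hp ⊢
      set a : G := Quotient.out (QuotientGroup.mk g : G ⧸ N) with ha
      have han : a⁻¹ * g ∈ N := by
        rw [← QuotientGroup.eq]
        exact QuotientGroup.out_eq' _
      rw [hJ, mem_idealColon] at hp
      have h2 := hp _ han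
      rw [mem_idealSMul, ← mul_smul] at h2
      have heq : (a⁻¹ * g)⁻¹ * a⁻¹ = g⁻¹ := by group
      rwa [heq] at h2
    rw [hcolon, mem_idealColon] at hxP
    have h1 := hxP 1 (Subgroup.mem_top 1)
    rwa [idealSMul_one] at h1
  obtain ⟨A, hAL, hAP⟩ := prime_list hP L hprods
  rw [hL, List.mem_map] at hAL
  obtain ⟨q', -, rfl⟩ := hAL
  let q2 : G ⧸ N := q'
  set g : G := Quotient.out q' with hg
  -- g·J ≤ Q, using normality
  have hgJQ : idealSMul g J ≤ Q := by
    intro y hy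
    rw [mem_idealSMul] at hy
    rw [hQ, mem_idealColon]
    intro n hn
    rw [mem_idealSMul]
    have hm : g⁻¹ * n⁻¹ * g ∈ N := Subgroup.Normal.conj_mem' ‹N.Normal› n⁻¹ (N.inv_mem hn) g
    have hy2 : (g⁻¹ * n⁻¹ * g) • (g⁻¹ • y) ∈ J := by
      have h1 : (g⁻¹ * n⁻¹ * g) • (g⁻¹ • y) ∈ idealSMul (g⁻¹ * n⁻¹ * g) J :=
        mem_idealSMul.2 (by rw [← mul_smul, inv_mul_cancel, one_smul]; exact hy)
      rw [hJ] at h1 ⊢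
      rwa [idealSMul_idealColon_self hm I] at h1
    have h3 : n⁻¹ • y ∈ idealSMul g J := by
      rw [mem_idealSMul, ← mul_smul]
      rw [← mul_smul] at hy2
      have heq : g⁻¹ * n⁻¹ * g * g⁻¹ = g⁻¹ * n⁻¹ := by group
      rwa [heq] at hy2
    exact hAP h3
  have hgJJ : idealSMul g J ≤ J := le_trans hgJQ hQJ
  have hpow : ∀ m : ℕ, idealSMul (g ^ (m + 1)) J ≤ idealSMul g J := by
    intro m
    induction m with
    | zero => rw [pow_one]
    | succ m ih =>
      calc idealSMul (g ^ (m + 2)) J = idealSMul (g ^ (m + 1)) (idealSMul g J) := by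
            rw [← idealSMul_mul, ← pow_succ]
        _ ≤ idealSMul (g ^ (m + 1)) J := idealSMul_mono _ hgJJ
        _ ≤ idealSMul g J := ih
  have hk : g ^ orderOf q2 ∈ N := by
    rw [← QuotientGroup.eq_one_iff]
    have h2 : (QuotientGroup.mk g : G ⧸ N) = q2 := QuotientGroup.out_eq' q2
    show (QuotientGroup.mk' N) (g ^ orderOf q2) = 1
    rw [map_pow, show (QuotientGroup.mk' N) g = q2 from h2]
    exact pow_orderOf_eq_one q2
  obtain ⟨m, hm⟩ : ∃ m, orderOf q2 = m + 1 :=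
    ⟨orderOf q2 - 1, (Nat.succ_pred_eq_of_pos (orderOf_pos q2)).symm⟩
  have hJeq : J = idealSMul (g ^ (m + 1)) J := by
    rw [← hm, hJ, idealSMul_idealColon_self hk I]
  calc J = idealSMul (g ^ (m + 1)) J := hJeq
    _ ≤ idealSMul g J := hpow m
    _ ≤ Q := hgJQ
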